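/- arXiv:math/0603262 — 2 statements merged into one kernel-verified Lean document; each statement's English description precedes it below -/
import Mathlib

section
/- Let Q be a quadratic form on ℝ^{k+1} with eigenvalues λ_0 ≤ λ_1 ≤ ⋯ ≤ λ_k (listed with multiplicity) such that λ_0,…,λ_{j-1} < 0 ≤ λ_j. Then the set {x ∈ S^k | Q(x) ≥ 0} deformation retracts onto (hence is homotopy equivalent to) the sphere S^{k-j} obtained by intersecting S^k with the span of the eigenvectors for λ_j,…,λ_k. -/
/-- The set `{x ∈ Sᵏ | Q(x) ≥ 0}` for a quadratic form `Q` of index `j`,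
written in coordinates given by an orthonormal eigenbasis:
`A = {x ∈ Sᵏ | Σ λᵢ xᵢ² ≥ 0}`. -/
def posSet (k : ℕ) (lam : Fin (k + 1) → ℝ) : Set (EuclideanSpace ℝ (Fin (k + 1))) :=
  {x | ‖x‖ = 1 ∧ 0 ≤ ∑ i, lam i * (x i) ^ 2}

/-- The subsphere `S^{k-j} = {x ∈ Sᵏ | x₀ = ⋯ = x_{j-1} = 0}` spanned by the
eigenvectors of the nonnegative eigenvalues. -/
def subSphere (k : ℕ) (j : Fin (k + 1)) : Set (EuclideanSpace ℝ (Fin (k + 1))) :=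
  {x | ‖x‖ = 1 ∧ ∀ i, i < j → x i = 0}

namespace Stmt4Aux

variable {k : ℕ}

/-- Scale the first `j` coordinates by `t`. -/
def g (j : Fin (k + 1)) (t : ℝ) (x : EuclideanSpace ℝ (Fin (k + 1))) :
    EuclideanSpace ℝ (Fin (k + 1)) :=
  WithLp.toLp 2 (fun i => (if i < j then t else 1) * x i)

lemma g_apply (j : Fin (k + 1)) (t : ℝ) (x : EuclideanSpace ℝ (Fin (k + 1))) (i : Fin (k + 1)) :
    g j t x i = (if i < j then t else 1) * x i := rfl

lemma continuous_g (j : Fin (k + 1)) :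
    Continuous fun p : ℝ × EuclideanSpace ℝ (Fin (k + 1)) => g j p.1 p.2 := by
  refine (PiLp.continuous_toLp (p := 2) (β := fun _ : Fin (k + 1) => ℝ)).comp
    (f := fun p : ℝ × EuclideanSpace ℝ (Fin (k + 1)) => fun i => (if i < j then p.1 else 1) * p.2 i) ?_
  apply continuous_pi
  intro i
  by_cases h : i < j
  · simp only [g, if_pos h]
    exact continuous_fst.mul ((continuous_apply i).comp ((PiLp.continuous_ofLp (p := 2) (β := fun _ : Fin (k + 1) => ℝ)).comp continuous_snd))
  · simp only [g, if_neg h]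
    exact (continuous_const.mul ((continuous_apply i).comp ((PiLp.continuous_ofLp (p := 2) (β := fun _ : Fin (k + 1) => ℝ)).comp continuous_snd)))

lemma exists_coord (lam : Fin (k + 1) → ℝ) (j : Fin (k + 1))
    (hneg : ∀ i, i < j → lam i < 0)
    {x : EuclideanSpace ℝ (Fin (k + 1))} (hx : x ∈ posSet k lam) :
    ∃ i, ¬ i < j ∧ x i ≠ 0 := by
  by_contra hcon
  push_neg at hcon
  -- all coordinates with index ≥ j vanish
  have hzero : ∀ i, ¬ i < j → x i = 0 := fun i hi => hcon i (not_lt.mp hi)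
  -- x is nonzero since ‖x‖ = 1
  have hxne : x ≠ 0 := by
    intro h
    have h1 : ‖x‖ = 1 := hx.1
    rw [h, norm_zero] at h1
    exact absurd h1 (by norm_num)
  obtain ⟨i0, hi0⟩ : ∃ i, x i ≠ 0 := by
    by_contra h
    push_neg at h
    exact hxne (by ext i; exact h i)
  have hi0j : i0 < j := by
    by_contra h
    exact hi0 (hzero i0 h)
  have hlt : ∑ i, lam i * (x i) ^ 2 < ∑ _i : Fin (k + 1), (0 : ℝ) := by
    apply Finset.sum_lt_sum
    · intro i _
      by_cases h : i < j
      · have := hneg i h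
        nlinarith [sq_nonneg (x i)]
      · rw [hzero i h]; simp
    · exact ⟨i0, Finset.mem_univ _, by nlinarith [hneg i0 hi0j, ((sq_nonneg (x i0)).lt_of_ne (Ne.symm (pow_ne_zero 2 hi0)))]⟩
  simp only [Finset.sum_const, smul_zero] at hlt
  exact absurd hx.2 (not_le.mpr hlt)

lemma g_ne_zero (lam : Fin (k + 1) → ℝ) (j : Fin (k + 1))
    (hneg : ∀ i, i < j → lam i < 0)
    {x : EuclideanSpace ℝ (Fin (k + 1))} (hx : x ∈ posSet k lam) (t : ℝ) :
    g j t x ≠ 0 := by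
  obtain ⟨i, hij, hxi⟩ := exists_coord lam j hneg hx
  intro h
  have : g j t x i = 0 := by rw [h]; simp
  rw [g_apply, if_neg hij, one_mul] at this
  exact hxi this

lemma sum_g_nonneg (lam : Fin (k + 1) → ℝ) (j : Fin (k + 1))
    (hneg : ∀ i, i < j → lam i < 0)
    {x : EuclideanSpace ℝ (Fin (k + 1))} (hx : x ∈ posSet k lam)
    {t : ℝ} (ht : t ^ 2 ≤ 1) :
    0 ≤ ∑ i, lam i * (g j t x i) ^ 2 := by
  refine le_trans hx.2 (Finset.sum_le_sum fun i _ => ?_)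
  by_cases h : i < j
  · rw [g_apply, if_pos h]
    have := hneg i h
    nlinarith [mul_nonneg (sub_nonneg.mpr ht) (sq_nonneg (x i))]
  · rw [g_apply, if_neg h, one_mul]

/-- The (un-restricted) map underlying the deformation: scale first `j` coords by `t`,
then renormalize. -/
noncomputable def F (j : Fin (k + 1)) (t : ℝ) (x : EuclideanSpace ℝ (Fin (k + 1))) :
    EuclideanSpace ℝ (Fin (k + 1)) :=
  ‖g j t x‖⁻¹ • g j t x

lemma F_mem_posSet (lam : Fin (k + 1) → ℝ) (j : Fin (k + 1))
    (hneg : ∀ i, i < j → lam i < 0)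
    {x : EuclideanSpace ℝ (Fin (k + 1))} (hx : x ∈ posSet k lam)
    {t : ℝ} (ht : t ^ 2 ≤ 1) : F j t x ∈ posSet k lam := by
  have hne := g_ne_zero lam j hneg hx t
  constructor
  · exact norm_smul_inv_norm (𝕜 := ℝ) hne
  · have h1 : ∀ i, F j t x i = ‖g j t x‖⁻¹ * g j t x i := fun i => rfl
    have : ∑ i, lam i * (F j t x i) ^ 2
        = (‖g j t x‖⁻¹) ^ 2 * ∑ i, lam i * (g j t x i) ^ 2 := by
      rw [Finset.mul_sum]
      exact Finset.sum_congr rfl fun i _ => by rw [h1]; ring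
    rw [this]
    exact mul_nonneg (sq_nonneg _) (sum_g_nonneg lam j hneg hx ht)

lemma g_one (j : Fin (k + 1)) (x : EuclideanSpace ℝ (Fin (k + 1))) : g j 1 x = x := by
  ext i
  simp [g_apply]

lemma F_one (j : Fin (k + 1)) {x : EuclideanSpace ℝ (Fin (k + 1))} (hx : ‖x‖ = 1) :
    F j 1 x = x := by
  rw [F, g_one, hx, inv_one, one_smul]

lemma F_fix (j : Fin (k + 1)) {x : EuclideanSpace ℝ (Fin (k + 1))}
    (hx : x ∈ subSphere k j) : F j 0 x = x := by
  have : g j 0 x = x := by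
    ext i
    by_cases h : i < j
    · rw [g_apply, if_pos h, zero_mul, hx.2 i h]
    · rw [g_apply, if_neg h, one_mul]
  rw [F, this, hx.1, inv_one, one_smul]

lemma F_mem_subSphere (lam : Fin (k + 1) → ℝ) (j : Fin (k + 1))
    (hneg : ∀ i, i < j → lam i < 0)
    {x : EuclideanSpace ℝ (Fin (k + 1))} (hx : x ∈ posSet k lam) :
    F j 0 x ∈ subSphere k j := by
  have hne := g_ne_zero lam j hneg hx 0
  refine ⟨norm_smul_inv_norm (𝕜 := ℝ) hne, fun i hi => ?_⟩
  show ‖g j 0 x‖⁻¹ * g j 0 x i = 0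
  rw [g_apply, if_pos hi, zero_mul, mul_zero]

lemma subSphere_subset (lam : Fin (k + 1) → ℝ) (hmono : Monotone lam)
    (j : Fin (k + 1)) (hpos : 0 ≤ lam j) :
    subSphere k j ⊆ posSet k lam := by
  intro x hx
  refine ⟨hx.1, Finset.sum_nonneg fun i _ => ?_⟩
  by_cases h : i < j
  · rw [hx.2 i h]; simp
  · have : lam j ≤ lam i := hmono (not_lt.mp h)
    nlinarith [sq_nonneg (x i)]

lemma continuous_F0 (lam : Fin (k + 1) → ℝ) (j : Fin (k + 1))
    (hneg : ∀ i, i < j → lam i < 0) :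
    Continuous fun x : posSet k lam => F j 0 (x : EuclideanSpace ℝ (Fin (k + 1))) := by
  have hg : Continuous fun x : posSet k lam =>
      g j 0 (x : EuclideanSpace ℝ (Fin (k + 1))) :=
    (continuous_g j).comp (continuous_const.prodMk continuous_subtype_val)
  have hn : Continuous fun x : posSet k lam =>
      ‖g j 0 (x : EuclideanSpace ℝ (Fin (k + 1)))‖⁻¹ :=
    hg.norm.inv₀ fun x => by
      simpa [norm_eq_zero] using g_ne_zero lam j hneg x.2 0
  exact hn.smul hg

noncomputable def r (lam : Fin (k + 1) → ℝ) (j : Fin (k + 1))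
    (hneg : ∀ i, i < j → lam i < 0) : C(posSet k lam, posSet k lam) :=
  ⟨fun x => ⟨F j 0 x.1, F_mem_posSet lam j hneg x.2 (by norm_num)⟩,
    Continuous.subtype_mk (continuous_F0 lam j hneg) _⟩

noncomputable def rS (lam : Fin (k + 1) → ℝ) (j : Fin (k + 1))
    (hneg : ∀ i, i < j → lam i < 0) : C(posSet k lam, subSphere k j) :=
  ⟨fun x => ⟨F j 0 x.1, F_mem_subSphere lam j hneg x.2⟩,
    Continuous.subtype_mk (continuous_F0 lam j hneg) _⟩

noncomputable def incl (lam : Fin (k + 1) → ℝ) (j : Fin (k + 1))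
    (hmono : Monotone lam) (hpos : 0 ≤ lam j) :
    C(subSphere k j, posSet k lam) :=
  ⟨fun x => ⟨x.1, subSphere_subset lam hmono j hpos x.2⟩,
    Continuous.subtype_mk continuous_subtype_val _⟩

lemma continuous_HF (lam : Fin (k + 1) → ℝ) (j : Fin (k + 1))
    (hneg : ∀ i, i < j → lam i < 0) :
    Continuous fun p : unitInterval × (posSet k lam) =>
      F j (1 - (p.1 : ℝ)) (p.2 : EuclideanSpace ℝ (Fin (k + 1))) := by
  have hc : Continuous fun p : unitInterval × (posSet k lam) =>
      ((1 - (p.1 : ℝ), (p.2 : EuclideanSpace ℝ (Fin (k + 1)))) :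
        ℝ × EuclideanSpace ℝ (Fin (k + 1))) :=
    (continuous_const.sub (continuous_subtype_val.comp continuous_fst)).prodMk
      (continuous_subtype_val.comp continuous_snd)
  have hg : Continuous fun p : unitInterval × (posSet k lam) =>
      g j (1 - (p.1 : ℝ)) (p.2 : EuclideanSpace ℝ (Fin (k + 1))) :=
    (continuous_g j).comp hc
  have hn : Continuous fun p : unitInterval × (posSet k lam) =>
      ‖g j (1 - (p.1 : ℝ)) (p.2 : EuclideanSpace ℝ (Fin (k + 1)))‖⁻¹ :=
    hg.norm.inv₀ fun p => by
      simpa [norm_eq_zero] using g_ne_zero lam j hneg p.2.2 (1 - (p.1 : ℝ))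
  exact hn.smul hg

noncomputable def H (lam : Fin (k + 1) → ℝ) (j : Fin (k + 1))
    (hneg : ∀ i, i < j → lam i < 0) :
    ContinuousMap.Homotopy (ContinuousMap.id (posSet k lam)) (r lam j hneg) where
  toFun := fun p => ⟨F j (1 - (p.1 : ℝ)) p.2.1,
    F_mem_posSet lam j hneg p.2.2 (by
      have h0 := p.1.2.1
      have h1 := p.1.2.2
      nlinarith)⟩
  continuous_toFun := Continuous.subtype_mk (continuous_HF lam j hneg) _
  map_zero_left := fun x => Subtype.ext (by
    show F j (1 - ((0 : unitInterval) : ℝ)) x.1 = x.1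
    rw [show (1 - ((0 : unitInterval) : ℝ)) = 1 by norm_num]
    exact F_one j x.2.1)
  map_one_left := fun x => Subtype.ext (by
    show F j (1 - ((1 : unitInterval) : ℝ)) x.1 = F j 0 x.1
    rw [show (1 - ((1 : unitInterval) : ℝ)) = 0 by norm_num])

end Stmt4Aux

/-- Let `Q` be a quadratic form on `ℝ^{k+1}` with eigenvalues
`λ₀ ≤ λ₁ ≤ ⋯ ≤ λ_k` such that `λ₀, …, λ_{j-1} < 0 ≤ λ_j`.  Then the set
`{x ∈ Sᵏ | Q(x) ≥ 0}` deformation retracts onto (hence is homotopy equivalent to)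
the sphere `S^{k-j}` obtained by intersecting `Sᵏ` with the span of the
eigenvectors for `λ_j, …, λ_k`. -/
theorem stmt_4 (k : ℕ) (lam : Fin (k + 1) → ℝ) (hmono : Monotone lam)
    (j : Fin (k + 1)) (hneg : ∀ i, i < j → lam i < 0) (hpos : 0 ≤ lam j) :
    (∃ r : C(posSet k lam, posSet k lam),
      (∀ x : posSet k lam, (r x : EuclideanSpace ℝ (Fin (k + 1))) ∈ subSphere k j) ∧
      (∀ x : posSet k lam, (x : EuclideanSpace ℝ (Fin (k + 1))) ∈ subSphere k j →
        r x = x) ∧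
      Nonempty (ContinuousMap.Homotopy (ContinuousMap.id _) r)) ∧
    Nonempty (ContinuousMap.HomotopyEquiv (posSet k lam) (subSphere k j)) := by
  classical
  refine ⟨⟨Stmt4Aux.r lam j hneg, fun x => Stmt4Aux.F_mem_subSphere lam j hneg x.2,
      fun x hx => Subtype.ext (Stmt4Aux.F_fix j hx), ⟨Stmt4Aux.H lam j hneg⟩⟩, ⟨?_⟩⟩
  refine ⟨Stmt4Aux.rS lam j hneg, Stmt4Aux.incl lam j hmono hpos, ?_, ?_⟩
  · have heq : (Stmt4Aux.incl lam j hmono hpos).comp (Stmt4Aux.rS lam j hneg) =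
        Stmt4Aux.r lam j hneg :=
      ContinuousMap.ext fun x => Subtype.ext rfl
    rw [heq]
    exact ⟨(Stmt4Aux.H lam j hneg).symm⟩
  · have heq : (Stmt4Aux.rS lam j hneg).comp (Stmt4Aux.incl lam j hmono hpos) =
        ContinuousMap.id _ :=
      ContinuousMap.ext fun x => Subtype.ext (Stmt4Aux.F_fix j x.2)
    rw [heq]
end

section
/- Let S ⊆ ℝ^k and define S'' ⊆ ℝ^{k+1} by S'' = ([−1,1] × S) ∪ ({1} × ℝ^k) ∪ ({−1} × ℝ^k). If S is a compact nonempty subset of ℝ^k, then S'' is homotopy equivalent to the suspension ΣS. -/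
/-- The relation on `X × [0,1]` whose quotient is the unreduced suspension. -/
def suspRel (X : Type) [TopologicalSpace X] (p q : X × unitInterval) : Prop :=
  (p.2 = 0 ∧ q.2 = 0) ∨ (p.2 = 1 ∧ q.2 = 1)

/-- The unreduced suspension `ΣX`: the quotient of `X × [0,1]` collapsing `X × {0}`
and `X × {1}` to two points. -/
def Susp (X : Type) [TopologicalSpace X] : Type := Quot (suspRel X)

noncomputable instance (X : Type) [TopologicalSpace X] : TopologicalSpace (Susp X) :=
  instTopologicalSpaceQuot

namespace Stmt11

open Set Topology unitInterval

abbrev E (k : ℕ) := EuclideanSpace ℝ (Fin k)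

def SS {k : ℕ} (S : Set (E k)) : Set (ℝ × E k) :=
  (Set.Icc (-1 : ℝ) 1 ×ˢ S) ∪ ({(1 : ℝ)} ×ˢ Set.univ) ∪ ({(-1 : ℝ)} ×ˢ Set.univ)

variable {k : ℕ} {S : Set (E k)}

lemma mem_SS_fst {p : ℝ × E k} (hp : p ∈ SS S) : p.1 ∈ Icc (-1:ℝ) 1 := by
  rcases hp with ((h | h) | h)
  · exact h.1
  · simp only [mem_prod, mem_singleton_iff] at h; rw [h.1]; constructor <;> norm_num
  · simp only [mem_prod, mem_singleton_iff] at h; rw [h.1]; constructor <;> norm_num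

lemma mem_SS_snd {p : ℝ × E k} (hp : p ∈ SS S) (h1 : p.1 ≠ 1) (h2 : p.1 ≠ -1) :
    p.2 ∈ S := by
  rcases hp with ((h | h) | h)
  · exact h.2
  · exact absurd h.1 h1
  · exact absurd h.1 h2

lemma mem_SS_mid {p : ℝ × E k} (h : p.1 ∈ Icc (-1:ℝ) 1) (h2 : p.2 ∈ S) : p ∈ SS S :=
  Or.inl (Or.inl ⟨h, h2⟩)

lemma mem_SS_right {p : ℝ × E k} (h : p.1 = 1) : p ∈ SS S :=
  Or.inl (Or.inr ⟨h, trivial⟩)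

lemma mem_SS_left {p : ℝ × E k} (h : p.1 = -1) : p ∈ SS S :=
  Or.inr ⟨h, trivial⟩

/-! ### The map `g : S'' → Susp S` -/

open Classical in
noncomputable def rho (s₀ : S) (y : E k) : S := if h : y ∈ S then ⟨y, h⟩ else s₀

noncomputable def sigma (t : ℝ) : I := Set.projIcc 0 1 zero_le_one ((t + 1) / 2)

noncomputable def gmap (s₀ : S) (q : SS S) : Susp S :=
  Quot.mk _ (rho s₀ q.1.2, sigma q.1.1)

lemma pole_top (x y : S) :
    Quot.mk (suspRel S) (x, (1:I)) = Quot.mk (suspRel S) (y, (1:I)) :=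
  Quot.sound (Or.inr ⟨rfl, rfl⟩)

lemma pole_bot (x y : S) :
    Quot.mk (suspRel S) (x, (0:I)) = Quot.mk (suspRel S) (y, (0:I)) :=
  Quot.sound (Or.inl ⟨rfl, rfl⟩)

lemma sigma_one : sigma (1:ℝ) = 1 := by
  rw [sigma, Set.projIcc_of_mem]
  · norm_num
  · norm_num

lemma sigma_neg_one : sigma (-1:ℝ) = 0 := by
  rw [sigma, Set.projIcc_of_mem]
  · norm_num
  · norm_num

lemma sigma_val {t : ℝ} (ht : t ∈ Icc (-1:ℝ) 1) : (sigma t : ℝ) = (t + 1) / 2 := by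
  rw [sigma, Set.projIcc_of_mem]
  exact ⟨by linarith [ht.1], by linarith [ht.2]⟩

end Stmt11

namespace Stmt11
open Set Topology unitInterval
variable {k : ℕ} {S : Set (E k)}

lemma continuous_sigma_comp {X : Type*} [TopologicalSpace X] {f : X → ℝ}
    (hf : Continuous f) : Continuous fun x => sigma (f x) :=
  continuous_projIcc.comp <| by continuity

lemma continuous_gmap (hS : IsCompact S) (s₀ : S) :
    Continuous (gmap (S := S) s₀) := by
  have _ : CompactSpace S := isCompact_iff_compactSpace.mp hS
  have hfst : Continuous fun q : SS S => (q : ℝ × E k).1 :=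
    continuous_fst.comp continuous_subtype_val
  have hsnd : Continuous fun q : SS S => (q : ℝ × E k).2 :=
    continuous_snd.comp continuous_subtype_val
  rw [continuous_iff_continuousAt]
  intro p
  rcases (mem_SS_fst p.2).2.eq_or_lt with h1 | h1
  · -- top pole : p.1.1 = 1
    rw [ContinuousAt, Filter.tendsto_def]
    intro O hO
    obtain ⟨O', hO'sub, hO'open, hmemO'⟩ := mem_nhds_iff.mp hO
    have hW : IsOpen (Quot.mk (suspRel S) ⁻¹' O') := hO'open.preimage continuous_quot_mk
    have hWtop : (univ : Set S) ×ˢ ({1} : Set I) ⊆ Quot.mk (suspRel S) ⁻¹' O' := by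
      rintro ⟨x, u⟩ ⟨-, hu⟩
      simp only [mem_singleton_iff] at hu
      subst hu
      have : Quot.mk (suspRel S) (x, (1:I)) = gmap s₀ p := by
        rw [gmap, h1, sigma_one]; exact pole_top _ _
      exact (congrArg (· ∈ O') this).mpr hmemO'
    obtain ⟨u, v, -, hv, huU, hvI, huv⟩ :=
      generalized_tube_lemma isCompact_univ isCompact_singleton hW hWtop
    obtain ⟨ε, hε, hball⟩ := Metric.isOpen_iff.mp hv 1 (hvI rfl)
    have hN : {q : SS S | 1 - ε < (q : ℝ × E k).1} ∈ 𝓝 p := by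
      refine IsOpen.mem_nhds (isOpen_Ioi.preimage hfst) ?_
      simp only [mem_preimage, mem_Ioi, mem_setOf_eq, h1]
      linarith
    refine Filter.mem_of_superset hN ?_
    intro q hq
    simp only [mem_setOf_eq] at hq
    have htIcc := mem_SS_fst q.2
    have hsv : sigma (q : ℝ × E k).1 ∈ v := by
      apply hball
      rw [Metric.mem_ball, Subtype.dist_eq, sigma_val htIcc]
      have : ((1:I):ℝ) = 1 := rfl
      rw [this, Real.dist_eq, abs_of_nonpos (by linarith [htIcc.2])]
      linarith
    have : (rho s₀ (q : ℝ × E k).2, sigma (q : ℝ × E k).1) ∈ u ×ˢ v :=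
      ⟨huU (mem_univ _), hsv⟩
    exact hO'sub (huv this)
  rcases (mem_SS_fst p.2).1.eq_or_lt with h2 | h2
  · -- bottom pole : p.1.1 = -1
    rw [ContinuousAt, Filter.tendsto_def]
    intro O hO
    obtain ⟨O', hO'sub, hO'open, hmemO'⟩ := mem_nhds_iff.mp hO
    have hW : IsOpen (Quot.mk (suspRel S) ⁻¹' O') := hO'open.preimage continuous_quot_mk
    have hWbot : (univ : Set S) ×ˢ ({0} : Set I) ⊆ Quot.mk (suspRel S) ⁻¹' O' := by
      rintro ⟨x, u⟩ ⟨-, hu⟩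
      simp only [mem_singleton_iff] at hu
      subst hu
      have : Quot.mk (suspRel S) (x, (0:I)) = gmap s₀ p := by
        rw [gmap, ← h2, sigma_neg_one]; exact pole_bot _ _
      exact (congrArg (· ∈ O') this).mpr hmemO'
    obtain ⟨u, v, -, hv, huU, hvI, huv⟩ :=
      generalized_tube_lemma isCompact_univ isCompact_singleton hW hWbot
    obtain ⟨ε, hε, hball⟩ := Metric.isOpen_iff.mp hv 0 (hvI rfl)
    have hN : {q : SS S | (q : ℝ × E k).1 < -1 + ε} ∈ 𝓝 p := by
      refine IsOpen.mem_nhds (isOpen_Iio.preimage hfst) ?_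
      simp only [mem_preimage, mem_Iio, mem_setOf_eq, ← h2]
      linarith
    refine Filter.mem_of_superset hN ?_
    intro q hq
    simp only [mem_setOf_eq] at hq
    have htIcc := mem_SS_fst q.2
    have hsv : sigma (q : ℝ × E k).1 ∈ v := by
      apply hball
      rw [Metric.mem_ball, Subtype.dist_eq, sigma_val htIcc]
      have : ((0:I):ℝ) = 0 := rfl
      rw [this, Real.dist_eq, sub_zero, abs_of_nonneg (by linarith [htIcc.1])]
      linarith
    have : (rho s₀ (q : ℝ × E k).2, sigma (q : ℝ × E k).1) ∈ u ×ˢ v :=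
      ⟨huU (mem_univ _), hsv⟩
    exact hO'sub (huv this)
  · -- middle : -1 < p.1.1 < 1
    have hUo : IsOpen {q : SS S | (q : ℝ × E k).1 ∈ Ioo (-1:ℝ) 1} :=
      isOpen_Ioo.preimage hfst
    have hpU : p ∈ {q : SS S | (q : ℝ × E k).1 ∈ Ioo (-1:ℝ) 1} := ⟨h2, h1⟩
    refine ContinuousOn.continuousAt ?_ (hUo.mem_nhds hpU)
    have hrho : ContinuousOn (fun q : SS S => rho s₀ (q : ℝ × E k).2)
        {q : SS S | (q : ℝ × E k).1 ∈ Ioo (-1:ℝ) 1} := by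
      rw [Topology.IsInducing.subtypeVal.continuousOn_iff]
      refine ContinuousOn.congr (f := fun q : SS S => (q : ℝ × E k).2)
        (hsnd.continuousOn) ?_
      intro q hq
      have hmem : (q : ℝ × E k).2 ∈ S :=
        mem_SS_snd q.2 (ne_of_lt hq.2) (ne_of_gt hq.1)
      simp [rho, hmem]
    have : ContinuousOn (fun q : SS S =>
        Quot.mk (suspRel S) (rho s₀ (q : ℝ × E k).2, sigma (q : ℝ × E k).1))
        {q : SS S | (q : ℝ × E k).1 ∈ Ioo (-1:ℝ) 1} :=
      continuous_quot_mk.comp_continuousOn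
        (hrho.prodMk (continuous_sigma_comp hfst).continuousOn)
    exact this

end Stmt11

namespace Stmt11
open Set Topology unitInterval
variable {k : ℕ} {S : Set (E k)}

/-! ### The map `h : Susp S → S''` -/

def thetaR (u : ℝ) : ℝ := max (-1) (min 1 (4*u - 2))

def ccR (u : ℝ) : ℝ := max 0 (min 1 (min (4*u) (4 - 4*u)))

lemma clamp_mem_Icc (z : ℝ) : max (-1:ℝ) (min 1 z) ∈ Icc (-1:ℝ) 1 :=
  ⟨le_max_left _ _, max_le (by norm_num) (min_le_left _ _)⟩

noncomputable def Hmap (s₀ x : S) (u : I) : ℝ × E k :=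
  (thetaR u, ccR u • (x : E k) + (1 - ccR u) • (s₀ : E k))

lemma Hmap_mem (s₀ x : S) (u : I) : Hmap s₀ x u ∈ SS S := by
  rcases le_or_gt u.1 (1/4) with h | h
  · apply mem_SS_left
    show thetaR u.1 = -1
    rw [thetaR, min_eq_right (by linarith), max_eq_left (by linarith)]
  rcases le_or_gt (3/4) u.1 with h' | h'
  · apply mem_SS_right
    show thetaR u.1 = 1
    rw [thetaR, min_eq_left (by linarith), max_eq_right (by norm_num)]
  · apply mem_SS_mid (clamp_mem_Icc _)
    have hcc : ccR u.1 = 1 := by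
      rw [ccR, min_eq_left (le_min (by linarith) (by linarith)),
        max_eq_right (by norm_num)]
    show ccR u.1 • (x : E k) + (1 - ccR u.1) • (s₀ : E k) ∈ S
    rw [hcc]
    simp [x.2]

lemma suspRel_resp_Hmap (s₀ : S) :
    ∀ p q : S × I, suspRel S p q →
      (⟨Hmap s₀ p.1 p.2, Hmap_mem _ _ _⟩ : SS S) = ⟨Hmap s₀ q.1 q.2, Hmap_mem _ _ _⟩ := by
  have e0 : ∀ x : S, Hmap s₀ x 0 = ((-1 : ℝ), (s₀ : E k)) := by
    intro x
    have h1 : thetaR ((0:I):ℝ) = -1 := by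
      show thetaR 0 = -1; rw [thetaR]; norm_num
    have h2 : ccR ((0:I):ℝ) = 0 := by
      show ccR 0 = 0; rw [ccR]; norm_num
    rw [Hmap, h1, h2]; simp
  have e1 : ∀ x : S, Hmap s₀ x 1 = ((1 : ℝ), (s₀ : E k)) := by
    intro x
    have h1 : thetaR ((1:I):ℝ) = 1 := by
      show thetaR 1 = 1; rw [thetaR]; norm_num
    have h2 : ccR ((1:I):ℝ) = 0 := by
      show ccR 1 = 0; rw [ccR]; norm_num
    rw [Hmap, h1, h2]; simp
  rintro ⟨x, u⟩ ⟨y, v⟩ (⟨hu, hv⟩ | ⟨hu, hv⟩) <;> apply Subtype.ext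
  · rw [show u = 0 from hu, show v = 0 from hv]
    show Hmap s₀ x 0 = Hmap s₀ y 0
    rw [e0 x, e0 y]
  · rw [show u = 1 from hu, show v = 1 from hv]
    show Hmap s₀ x 1 = Hmap s₀ y 1
    rw [e1 x, e1 y]

noncomputable def hquot (s₀ : S) : Susp S → SS S :=
  Quot.lift (fun p : S × I => (⟨Hmap s₀ p.1 p.2, Hmap_mem _ _ _⟩ : SS S))
    (suspRel_resp_Hmap s₀)

lemma continuous_thetaR : Continuous thetaR :=
  continuous_const.max (continuous_const.min (by fun_prop))

lemma continuous_ccR : Continuous ccR :=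
  continuous_const.max (continuous_const.min ((by fun_prop : Continuous fun u : ℝ => 4*u).min (by fun_prop)))

lemma continuous_hquot (s₀ : S) : Continuous (hquot s₀) := by
  apply continuous_quot_lift
  apply Continuous.subtype_mk
  unfold Hmap
  have hu : Continuous fun p : S × I => (p.2 : ℝ) :=
    continuous_subtype_val.comp continuous_snd
  have hx : Continuous fun p : S × I => (p.1 : E k) :=
    continuous_subtype_val.comp continuous_fst
  exact ((continuous_thetaR.comp hu).prodMk
    (((continuous_ccR.comp hu).smul hx).add
      ((continuous_const.sub (continuous_ccR.comp hu)).smul continuous_const)))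

end Stmt11

namespace Stmt11
open Set Topology unitInterval
variable {k : ℕ} {S : Set (E k)}

/-! ### Homotopy from `h ∘ g` to `id` on `S''` -/

def csf (s t : ℝ) : ℝ := max 0 (min 1 ((2 - s) * (1 - |t|) + s))

noncomputable def Kraw (s₀ : S) (s : ℝ) (p : ℝ × E k) : ℝ × E k :=
  (max (-1) (min 1 ((2 - s) * p.1)), csf s p.1 • p.2 + (1 - csf s p.1) • (s₀ : E k))

lemma Kraw_mem (s₀ : S) {s : ℝ} (hs : s ∈ Icc (0:ℝ) 1) {p : ℝ × E k}
    (hp : p ∈ SS S) : Kraw s₀ s p ∈ SS S := by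
  set t := p.1 with ht
  have ha1 : (1:ℝ) ≤ 2 - s := by linarith [hs.2]
  have htIcc := mem_SS_fst hp
  have habs : |t| ≤ 1 := abs_le.mpr htIcc
  rcases lt_or_ge ((2 - s) * |t|) 1 with h | h
  · have habs1 : |t| < 1 := by nlinarith
    have hx : p.2 ∈ S := by
      refine mem_SS_snd hp ?_ ?_ <;>
        · intro hcon
          rw [ht, hcon] at habs1
          norm_num at habs1
    have hcs : csf s t = 1 := by
      have : (1:ℝ) ≤ (2 - s) * (1 - |t|) + s := by nlinarith
      rw [csf, min_eq_left this, max_eq_right (by norm_num)]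
    apply mem_SS_mid (clamp_mem_Icc _)
    show csf s t • p.2 + (1 - csf s t) • (s₀ : E k) ∈ S
    rw [hcs]
    simpa using hx
  · rcases le_or_gt 0 t with h0 | h0
    · apply mem_SS_right
      show max (-1) (min 1 ((2 - s) * t)) = 1
      rw [abs_of_nonneg h0] at h
      rw [min_eq_left h, max_eq_right (by norm_num)]
    · apply mem_SS_left
      show max (-1) (min 1 ((2 - s) * t)) = -1
      rw [abs_of_neg h0] at h
      have : (2 - s) * t ≤ -1 := by nlinarith
      rw [min_eq_right (by linarith), max_eq_left this]

noncomputable def Kfun (s₀ : S) (z : I × SS S) : SS S :=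
  ⟨Kraw s₀ z.1.1 z.2.1, Kraw_mem s₀ z.1.2 z.2.2⟩

lemma continuous_csf : Continuous fun q : ℝ × ℝ => csf q.1 q.2 := by
  apply continuous_const.max
  apply continuous_const.min
  have : Continuous fun q : ℝ × ℝ => |q.2| := continuous_abs.comp continuous_snd
  fun_prop

lemma continuous_Kfun (s₀ : S) : Continuous (Kfun s₀) := by
  apply Continuous.subtype_mk
  have hs : Continuous fun z : I × SS S => (z.1 : ℝ) :=
    continuous_subtype_val.comp continuous_fst
  have ht : Continuous fun z : I × SS S => (z.2 : ℝ × E k).1 :=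
    continuous_fst.comp (continuous_subtype_val.comp continuous_snd)
  have hx : Continuous fun z : I × SS S => (z.2 : ℝ × E k).2 :=
    continuous_snd.comp (continuous_subtype_val.comp continuous_snd)
  have hcsf : Continuous fun z : I × SS S => csf (z.1 : ℝ) (z.2 : ℝ × E k).1 :=
    continuous_csf.comp (hs.prodMk ht)
  unfold Kraw
  exact (continuous_const.max (continuous_const.min
      ((continuous_const.sub hs).mul ht))).prodMk
    ((hcsf.smul hx).add ((continuous_const.sub hcsf).smul continuous_const))

lemma min_two (t : ℝ) : min (2*t+2) (2-2*t) = 2 - 2*|t| := by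
  rcases le_or_gt 0 t with h | h
  · rw [abs_of_nonneg h, min_eq_right (by linarith)]
  · rw [abs_of_neg h, min_eq_left (by linarith)]; ring

lemma Kfun_zero (s₀ : S) (q : SS S) : Kfun s₀ (0, q) = hquot s₀ (gmap s₀ q) := by
  obtain ⟨⟨t, x⟩, hq⟩ := q
  have htIcc : t ∈ Icc (-1:ℝ) 1 := mem_SS_fst hq
  apply Subtype.ext
  show Kraw s₀ ((0:I):ℝ) (t, x) = Hmap s₀ (rho s₀ x) (sigma t)
  have h0 : ((0:I):ℝ) = 0 := rfl
  rw [h0]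
  have hσ : ((sigma t : I) : ℝ) = (t+1)/2 := sigma_val htIcc
  refine Prod.ext ?_ ?_
  · show max (-1) (min 1 ((2 - 0) * t)) = thetaR ((sigma t : I) : ℝ)
    rw [thetaR, hσ, show (4*((t+1)/2) - 2 : ℝ) = (2 - 0) * t by ring]
  · show csf 0 t • x + (1 - csf 0 t) • (s₀ : E k)
      = ccR ((sigma t : I) : ℝ) • ((rho s₀ x : S) : E k)
        + (1 - ccR ((sigma t : I) : ℝ)) • (s₀ : E k)
    have hc : ccR ((sigma t : I) : ℝ) = csf 0 t := by
      rw [ccR, hσ, csf, show (4*((t+1)/2) : ℝ) = 2*t+2 by ring,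
        show (4 - (2*t+2) : ℝ) = 2 - 2*t by ring, min_two,
        show ((2 - 0) * (1 - |t|) + 0 : ℝ) = 2 - 2*|t| by ring]
    rw [hc]
    by_cases hx : x ∈ S
    · rw [rho, dif_pos hx]
    · have ht1 : t = 1 ∨ t = -1 := by
        by_contra hcon
        push_neg at hcon
        exact hx (mem_SS_snd hq hcon.1 hcon.2)
      have hcs : csf 0 t = 0 := by
        have habs : |t| = 1 := by rcases ht1 with h | h <;> rw [h] <;> norm_num
        rw [csf, habs]
        norm_num
      rw [hcs]
      simp

lemma Kfun_one (s₀ : S) (q : SS S) : Kfun s₀ (1, q) = q := by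
  obtain ⟨⟨t, x⟩, hq⟩ := q
  have htIcc : t ∈ Icc (-1:ℝ) 1 := mem_SS_fst hq
  have habs : |t| ≤ 1 := abs_le.mpr htIcc
  apply Subtype.ext
  show Kraw s₀ ((1:I):ℝ) (t, x) = (t, x)
  have h1 : ((1:I):ℝ) = 1 := rfl
  rw [h1]
  have hcs : csf 1 t = 1 := by
    rw [csf, min_eq_left (by nlinarith), max_eq_right (by norm_num)]
  refine Prod.ext ?_ ?_
  · show max (-1) (min 1 ((2 - 1) * t)) = t
    rw [show ((2 - 1) * t : ℝ) = t by ring, min_eq_right htIcc.2,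
      max_eq_right htIcc.1]
  · show csf 1 t • x + (1 - csf 1 t) • (s₀ : E k) = x
    rw [hcs]
    simp

noncomputable def Khtpy (hS : IsCompact S) (s₀ : S) :
    ContinuousMap.Homotopy
      ((⟨hquot s₀, continuous_hquot s₀⟩ : C(Susp S, SS S)).comp
        ⟨gmap s₀, continuous_gmap hS s₀⟩)
      (ContinuousMap.id (SS S)) where
  toFun := fun z => Kfun s₀ z
  continuous_toFun := continuous_Kfun s₀
  map_zero_left := Kfun_zero s₀
  map_one_left := Kfun_one s₀

/-! ### Homotopy from `g ∘ h` to `id` on `Susp S` -/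

noncomputable def alphaR (u : ℝ) : ℝ := (thetaR u + 1) / 2

lemma alphaR_mem (u : ℝ) : alphaR u ∈ Icc (0:ℝ) 1 := by
  have h := clamp_mem_Icc (4*u - 2)
  exact ⟨by rw [alphaR]; have := h.1; unfold thetaR; linarith,
    by rw [alphaR]; have := h.2; unfold thetaR; linarith⟩

noncomputable def linI (s u : I) : I :=
  ⟨(1 - s.1) * alphaR u.1 + s.1 * u.1, by
    have hα := alphaR_mem u.1
    constructor
    · have := s.2.1; have := s.2.2; have := u.2.1
      nlinarith [hα.1]
    · have := s.2.1; have := s.2.2; have := u.2.2; have := u.2.1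
      nlinarith [hα.2]⟩

lemma linI_zero_right (s : I) : linI s 0 = 0 := by
  apply Subtype.ext
  show (1 - s.1) * alphaR ((0:I):ℝ) + s.1 * ((0:I):ℝ) = 0
  rw [show ((0:I):ℝ) = 0 from rfl]
  have : alphaR 0 = 0 := by rw [alphaR, thetaR]; norm_num
  rw [this]; ring

lemma linI_one_right (s : I) : linI s 1 = 1 := by
  apply Subtype.ext
  show (1 - s.1) * alphaR ((1:I):ℝ) + s.1 * ((1:I):ℝ) = 1
  rw [show ((1:I):ℝ) = 1 from rfl]
  have : alphaR 1 = 1 := by rw [alphaR, thetaR]; norm_num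
  rw [this]; ring

noncomputable def Lfun (z : I × Susp S) : Susp S :=
  Quot.lift (fun p : S × I => Quot.mk (suspRel S) (p.1, linI z.1 p.2))
    (by
      rintro ⟨x, u⟩ ⟨y, v⟩ (⟨hu, hv⟩ | ⟨hu, hv⟩)
      · rw [show u = 0 from hu, show v = 0 from hv]
        show Quot.mk (suspRel S) (x, linI z.1 0) = Quot.mk (suspRel S) (y, linI z.1 0)
        rw [linI_zero_right]
        exact pole_bot x y
      · rw [show u = 1 from hu, show v = 1 from hv]
        show Quot.mk (suspRel S) (x, linI z.1 1) = Quot.mk (suspRel S) (y, linI z.1 1)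
        rw [linI_one_right]
        exact pole_top x y) z.2

lemma continuous_alphaR : Continuous alphaR := by
  unfold alphaR
  exact (continuous_thetaR.add continuous_const).div_const 2

lemma continuous_Lfun : Continuous (Lfun (S := S)) := by
  apply (isQuotientMap_quot_mk (r := suspRel S)).continuous_lift_prod_right
  show Continuous fun p : I × (S × I) => Quot.mk (suspRel S) (p.2.1, linI p.1 p.2.2)
  apply continuous_quot_mk.comp
  apply Continuous.prodMk (continuous_fst.comp continuous_snd)
  apply Continuous.subtype_mk
  have hs : Continuous fun p : I × (S × I) => (p.1 : ℝ) :=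
    continuous_subtype_val.comp continuous_fst
  have hu : Continuous fun p : I × (S × I) => (p.2.2 : ℝ) :=
    continuous_subtype_val.comp (continuous_snd.comp continuous_snd)
  exact ((continuous_const.sub hs).mul (continuous_alphaR.comp hu)).add (hs.mul hu)

lemma thetaR_low {u : ℝ} (h : u ≤ 1/4) : thetaR u = -1 := by
  rw [thetaR, min_eq_right (by linarith), max_eq_left (by linarith)]

lemma thetaR_high {u : ℝ} (h : 3/4 ≤ u) : thetaR u = 1 := by
  rw [thetaR, min_eq_left (by linarith), max_eq_right (by norm_num)]

lemma ccR_eq_one {u : ℝ} (h1 : 1/4 ≤ u) (h2 : u ≤ 3/4) : ccR u = 1 := by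
  rw [ccR, min_eq_left (le_min (by linarith) (by linarith)),
    max_eq_right (by norm_num)]

lemma Lfun_zero (s₀ : S) (z : Susp S) : Lfun (0, z) = gmap s₀ (hquot s₀ z) := by
  refine Quot.ind (β := fun z => Lfun (0, z) = gmap s₀ (hquot s₀ z)) (fun p => ?_) z
  obtain ⟨x, u⟩ := p
  show Quot.mk (suspRel S) (x, linI 0 u)
    = Quot.mk (suspRel S)
      (rho s₀ (ccR u.1 • (x : E k) + (1 - ccR u.1) • (s₀ : E k)), sigma (thetaR u.1))
  have hθ : thetaR u.1 ∈ Icc (-1:ℝ) 1 := clamp_mem_Icc _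
  have hmemα : (thetaR u.1 + 1)/2 ∈ Icc (0:ℝ) 1 :=
    ⟨by linarith [hθ.1], by linarith [hθ.2]⟩
  have hσθ : sigma (thetaR u.1) = ⟨alphaR u.1, alphaR_mem u.1⟩ := by
    rw [sigma, projIcc_of_mem _ hmemα]
    exact Subtype.ext rfl
  have hlin0 : linI 0 u = ⟨alphaR u.1, alphaR_mem u.1⟩ := by
    apply Subtype.ext
    show (1 - ((0:I):ℝ)) * alphaR u.1 + ((0:I):ℝ) * u.1 = alphaR u.1
    rw [show ((0:I):ℝ) = 0 from rfl]; ring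
  rw [hlin0, hσθ]
  rcases le_or_gt u.1 (1/4) with h | h
  · have hA : (⟨alphaR u.1, alphaR_mem u.1⟩ : I) = 0 := by
      apply Subtype.ext
      show alphaR u.1 = 0
      rw [alphaR, thetaR_low h]; norm_num
    exact Quot.sound (Or.inl ⟨hA, hA⟩)
  rcases le_or_gt (3/4) u.1 with h' | h'
  · have hA : (⟨alphaR u.1, alphaR_mem u.1⟩ : I) = 1 := by
      apply Subtype.ext
      show alphaR u.1 = 1
      rw [alphaR, thetaR_high h']; norm_num
    exact Quot.sound (Or.inr ⟨hA, hA⟩)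
  · have hcc : ccR u.1 = 1 := ccR_eq_one (by linarith) (by linarith)
    have hrho : rho s₀ (ccR u.1 • (x : E k) + (1 - ccR u.1) • (s₀ : E k)) = x := by
      rw [hcc]
      simp only [one_smul, sub_self, zero_smul, add_zero]
      unfold rho
      rw [dif_pos x.2]
    rw [hrho]

lemma Lfun_one (z : Susp S) : Lfun (1, z) = z := by
  refine Quot.ind (β := fun z => Lfun (1, z) = z) (fun p => ?_) z
  obtain ⟨x, u⟩ := p
  show Quot.mk (suspRel S) (x, linI 1 u) = Quot.mk (suspRel S) (x, u)
  have : linI 1 u = u := by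
    apply Subtype.ext
    show (1 - ((1:I):ℝ)) * alphaR u.1 + ((1:I):ℝ) * u.1 = u.1
    rw [show ((1:I):ℝ) = 1 from rfl]; ring
  rw [this]

noncomputable def Lhtpy (hS : IsCompact S) (s₀ : S) :
    ContinuousMap.Homotopy
      ((⟨gmap s₀, continuous_gmap hS s₀⟩ : C(SS S, Susp S)).comp
        ⟨hquot s₀, continuous_hquot s₀⟩)
      (ContinuousMap.id (Susp S)) where
  toFun := Lfun
  continuous_toFun := continuous_Lfun
  map_zero_left := fun z => Lfun_zero s₀ z
  map_one_left := fun z => Lfun_one z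

end Stmt11

/-- Let `S ⊆ ℝ^k` be compact and nonempty, and define `S'' ⊆ ℝ^{k+1}` by
`S'' = ([-1,1] × S) ∪ ({1} × ℝ^k) ∪ ({-1} × ℝ^k)`.  Then `S''` is homotopy
equivalent to the unreduced suspension `ΣS`. -/
theorem stmt_11 (k : ℕ) (S : Set (EuclideanSpace ℝ (Fin k)))
    (hS : IsCompact S) (hne : S.Nonempty)
    (S'' : Set (ℝ × EuclideanSpace ℝ (Fin k)))
    (hS'' : S'' = (Set.Icc (-1 : ℝ) 1 ×ˢ S) ∪ ({(1 : ℝ)} ×ˢ Set.univ) ∪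
      ({(-1 : ℝ)} ×ˢ Set.univ)) :
    Nonempty (ContinuousMap.HomotopyEquiv S'' (Susp S)) := by
  subst hS''
  obtain ⟨s₀, hs₀⟩ := hne
  exact ⟨{ toFun := ⟨Stmt11.gmap ⟨s₀, hs₀⟩, Stmt11.continuous_gmap hS ⟨s₀, hs₀⟩⟩,
           invFun := ⟨Stmt11.hquot ⟨s₀, hs₀⟩, Stmt11.continuous_hquot ⟨s₀, hs₀⟩⟩,
           left_inv := ⟨Stmt11.Khtpy hS ⟨s₀, hs₀⟩⟩,
           right_inv := ⟨Stmt11.Lhtpy hS ⟨s₀, hs₀⟩⟩ }⟩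
end
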